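/- A group G satisfies the first-order sentence μ: 'for all x, y with x ≠ 1 and y ≠ 1 there exists z with [y, z x z⁻¹] ≠ 1' if and only if the centralizer of every nontrivial normal subgroup of G is trivial. -/
import Mathlib


/-- A group satisfies the sentence `μ` ("for all nontrivial `x, y` some conjugate
of `x` fails to commute with `y`") iff the centralizer of every nontrivial normal
subgroup is trivial. -/
theorem stmt_13 (G : Type*) [Group G] :
    (∀ x y : G, x ≠ 1 → y ≠ 1 → ∃ z : G, y * (z * x * z⁻¹) ≠ (z * x * z⁻¹) * y) ↔
    (∀ N : Subgroup G, N.Normal → N ≠ ⊥ → Subgroup.centralizer (N : Set G) = ⊥) := by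
  constructor
  · intro hμ N hN hNbot
    ext y
    simp only [Subgroup.mem_bot]
    constructor
    · intro hy
      by_contra hy1
      obtain ⟨x, hxN, hx1⟩ : ∃ x ∈ N, x ≠ 1 := by
        by_contra h
        push_neg at h
        exact hNbot (le_antisymm (fun a ha => Subgroup.mem_bot.2 (h a ha)) bot_le)
      obtain ⟨z, hz⟩ := hμ x y hx1 hy1
      have : z * x * z⁻¹ ∈ N := hN.conj_mem x hxN z
      exact hz ((Subgroup.mem_centralizer_iff.1 hy) _ this).symm
    · rintro rfl
      exact Subgroup.one_mem _
  · intro h x y hx hy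
    by_contra hc
    push_neg at hc
    have hyc : y ∈ Subgroup.centralizer (Subgroup.normalClosure {x} : Set G) := by
      have hle : Subgroup.normalClosure {x} ≤ Subgroup.centralizer {y} := by
        rw [Subgroup.normalClosure]
        apply Subgroup.closure_le _ |>.2
        rintro a ha
        rw [Group.mem_conjugatesOfSet_iff] at ha
        obtain ⟨b, hb, hconj⟩ := ha
        rcases hconj with ⟨c, hc'⟩
        rw [Set.mem_singleton_iff] at hb
        rw [hb] at hc'
        refine Subgroup.mem_centralizer_iff.2 ?_
        rintro g (rfl : g = y)
        have := hc c
        rw [SemiconjBy] at hc'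
        have hform : a = (c:G) * x * (c:G)⁻¹ := by
          rw [eq_mul_inv_iff_mul_eq]; exact hc'.symm
        rw [hform]
        exact this
      refine Subgroup.mem_centralizer_iff.2 ?_
      intro g hg
      have := Subgroup.mem_centralizer_iff.1 (hle hg) y rfl
      exact this.symm
    have hbot := h (Subgroup.normalClosure {x}) (Subgroup.normalClosure_normal) ?_
    · rw [hbot] at hyc
      exact hy (Subgroup.mem_bot.1 hyc)
    · intro hb
      have : x ∈ Subgroup.normalClosure {x} := Subgroup.subset_normalClosure rfl
      rw [hb] at this
      exact hx (Subgroup.mem_bot.1 this)
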